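/- Fix k > 1 and h ≥ 0, and for c ≥ c_#(h) let λ₁(c) denote the largest real root of z² − cz − 1 + k e^{−zch} = 0 and μ₁(c) the unique positive real root of z² − cz − 1 − e^{−zch} = 0. Then the function T(c) = λ₁(c)/μ₁(c) is strictly increasing on [c_#(h), ∞); equivalently, writing λ̃₁(c) = (c + √(c²+4))/2 (the positive root of z² − cz − 1 = 0), both complementary functions ε₁(c) = λ̃₁(c) − λ₁(c) and ε₂(c) = μ₁(c) − λ̃₁(c) are strictly decreasing with limit 0 as c → +∞, and T(c) → 1 as c → +∞. -/
import Mathlib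


open Filter Set

noncomputable section

/-- The characteristic function `χ(z,c) = z² - cz - 1 + k e^{-zch}` at the zero
equilibrium of the toy model. -/
def chi (k c h z : ℝ) : ℝ := z ^ 2 - c * z - 1 + k * Real.exp (-(z * c * h))

/-- The characteristic function `χ_κ(z) = z² - cz - 1 - e^{-zch}` at the positive
equilibrium `κ = 2` of the toy model. -/
def chiK (c h z : ℝ) : ℝ := z ^ 2 - c * z - 1 - Real.exp (-(z * c * h))

namespace RatioAux

noncomputable def Lr (c : ℝ) : ℝ := (c + Real.sqrt (c ^ 2 + 4)) / 2

lemma Lr_sq (c : ℝ) : Lr c ^ 2 - c * Lr c - 1 = 0 := by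
  have h4 : (0:ℝ) ≤ c ^ 2 + 4 := by positivity
  have hs := Real.sq_sqrt h4
  unfold Lr; nlinarith [hs]

lemma Lr_gt_c {c : ℝ} (hc : 0 < c) : c < Lr c := by
  have : c < Real.sqrt (c ^ 2 + 4) := by
    have h := Real.sqrt_lt_sqrt (sq_nonneg c) (by linarith : c^2 < c^2+4)
    rwa [Real.sqrt_sq hc.le] at h
  unfold Lr; linarith

lemma Lr_gt_one {c : ℝ} (hc : 0 < c) : 1 < Lr c := by
  have h2 : (2:ℝ) ≤ Real.sqrt (c ^ 2 + 4) := by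
    rw [show (2:ℝ) = Real.sqrt (2^2) by rw [Real.sqrt_sq]; norm_num]
    exact Real.sqrt_le_sqrt (by nlinarith)
  unfold Lr; linarith

lemma Lr_lt {c c' : ℝ} (hc : 0 < c) (hcc : c < c') : Lr c < Lr c' := by
  have : Real.sqrt (c ^ 2 + 4) < Real.sqrt (c' ^ 2 + 4) :=
    Real.sqrt_lt_sqrt (by positivity) (by nlinarith)
  unfold Lr; linarith

lemma quad_fact (c z : ℝ) : z ^ 2 - c * z - 1 = (z - Lr c) * (z + (Lr c - c)) := by
  linear_combination Lr_sq c

lemma key_ineq {c c' : ℝ} (hc : 0 < c) (hcc : c < c') :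
    Lr c - c < (Lr c' - Lr c) + (Lr c' - c') := by
  set a := Lr c with hadef
  set b := Lr c' with hbdef
  have ha1 : 1 < a := Lr_gt_one hc
  have hab : a < b := Lr_lt hc hcc
  have hau : a * (a - c) = 1 := by linear_combination Lr_sq c
  have hbv : b * (b - c') = 1 := by linear_combination Lr_sq c'
  have ha0 : (0:ℝ) < a := by linarith
  have hb0 : (0:ℝ) < b := by linarith
  have hab1 : 1 < a * b := by nlinarith
  have e1 : a - c = 1/a := by field_simp; linear_combination hau
  have e2 : b - c' = 1/b := by field_simp; linear_combination hbv
  have e3 : 1/a - 1/b = (b - a)/(a*b) := by field_simp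
  have e4 : (b - a)/(a*b) < b - a := div_lt_self (by linarith) hab1
  rw [e1, e2]; linarith

lemma chi_cont (k c h : ℝ) : Continuous (chi k c h) := by
  unfold chi; fun_prop

lemma chiK_cont (c h : ℝ) : Continuous (chiK c h) := by
  unfold chiK; fun_prop

lemma lam_facts {k c hdel l : ℝ} (hk : 0 < k) (hc : 0 < c)
    (hl0 : 0 < l) (hleq : chi k c hdel l = 0) :
    l < Lr c ∧ (Lr c - l) * (l + (Lr c - c)) = k * Real.exp (-(l * c * hdel)) := by
  unfold chi at hleq
  have hfac := quad_fact c l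
  have heq : (Lr c - l) * (l + (Lr c - c)) = k * Real.exp (-(l * c * hdel)) := by
    linear_combination hfac - hleq
  have hLc := Lr_gt_c hc
  have hE := Real.exp_pos (-(l * c * hdel))
  have hlL : l < Lr c := by nlinarith [mul_pos hk hE]
  exact ⟨hlL, heq⟩

lemma mu_facts {c hdel m : ℝ} (hc : 0 < c) (hm0 : 0 < m) (hmeq : chiK c hdel m = 0) :
    Lr c < m ∧ (m - Lr c) * (m + (Lr c - c)) = Real.exp (-(m * c * hdel)) := by
  unfold chiK at hmeq
  have hfac := quad_fact c m
  have heq : (m - Lr c) * (m + (Lr c - c)) = Real.exp (-(m * c * hdel)) := by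
    linear_combination hmeq - hfac
  have hLc := Lr_gt_c hc
  have hE := Real.exp_pos (-(m * c * hdel))
  have hmL : Lr c < m := by nlinarith
  exact ⟨hmL, heq⟩

lemma mu_lt_of_pos {c hdel m z : ℝ} (hm0 : 0 < m) (hmr : chiK c hdel m = 0)
    (huniq : ∀ w, 0 < w → chiK c hdel w = 0 → w = m) (hz : 0 < z)
    (hpos : 0 < chiK c hdel z) : m < z := by
  rcases lt_trichotomy z m with hlt | heqz | hgt
  · have h0 : chiK c hdel 0 = -2 := by simp [chiK]; norm_num
    have hsub := intermediate_value_Ioo hz.le ((chiK_cont c hdel).continuousOn)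
    have h0mem : (0:ℝ) ∈ Ioo (chiK c hdel 0) (chiK c hdel z) := by
      rw [h0]; exact ⟨by norm_num, hpos⟩
    obtain ⟨w, hw, hweq⟩ := hsub h0mem
    have := huniq w hw.1 hweq
    linarith [hw.2]
  · subst heqz; rw [hmr] at hpos; linarith
  · exact hgt

lemma lam_gt_of_neg {k c hdel l z : ℝ} (hc : 0 < c) (hk : 0 < k)
    (hmax : ∀ w, chi k c hdel w = 0 → w ≤ l) (hneg : chi k c hdel z < 0) : z < l := by
  set Z := max z (Lr c) + 1 with hZdef
  have hZz : z < Z := lt_of_le_of_lt (le_max_left _ _) (lt_add_one _)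
  have hZL : Lr c < Z := lt_of_le_of_lt (le_max_right _ _) (lt_add_one _)
  have hL1 := Lr_gt_one hc
  have hLc := Lr_gt_c hc
  have hchiZ : 0 < chi k c hdel Z := by
    have hfac := quad_fact c Z
    have hrw : chi k c hdel Z
        = (Z - Lr c) * (Z + (Lr c - c)) + k * Real.exp (-(Z * c * hdel)) := by
      unfold chi; linear_combination hfac
    rw [hrw]
    have h1 : 0 < Z - Lr c := by linarith
    have h2 : 0 < Z + (Lr c - c) := by linarith
    have := mul_pos h1 h2
    have := mul_pos hk (Real.exp_pos (-(Z * c * hdel)))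
    linarith
  have hsub := intermediate_value_Ioo hZz.le ((chi_cont k c hdel).continuousOn)
  obtain ⟨w, hw, hweq⟩ := hsub ⟨hneg, hchiZ⟩
  have := hmax w hweq
  linarith [hw.1]


lemma eps1_step {k hdel c c' l l' : ℝ} (hk : 0 < k) (hh : 0 ≤ hdel)
    (hc : 0 < c) (hcc : c < c')
    (hl0 : 0 < l) (hleq : chi k c hdel l = 0)
    (hmax' : ∀ w, chi k c' hdel w = 0 → w ≤ l') :
    Lr c' - l' < Lr c - l := by
  have hc' : 0 < c' := lt_trans hc hcc
  obtain ⟨hlL, heq⟩ := lam_facts hk hc hl0 hleq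
  set z' := l + (Lr c' - Lr c) with hz'def
  have hLL : Lr c < Lr c' := Lr_lt hc hcc
  have hz'l : l < z' := by rw [hz'def]; linarith
  have hz'0 : 0 < z' := lt_trans hl0 hz'l
  have hkey := key_ineq hc hcc
  have hA : l + (Lr c - c) < z' + (Lr c' - c') := by rw [hz'def]; linarith
  have hB : 0 < l + (Lr c - c) := by linarith [Lr_gt_c hc]
  have hexp : Real.exp (-(z' * c' * hdel)) ≤ Real.exp (-(l * c * hdel)) := by
    apply Real.exp_le_exp.mpr
    have h1 : l * c ≤ z' * c' := by nlinarith
    nlinarith [mul_le_mul_of_nonneg_right h1 hh]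
  have hEE : k * Real.exp (-(z' * c' * hdel)) ≤ k * Real.exp (-(l * c * hdel)) :=
    mul_le_mul_of_nonneg_left hexp hk.le
  have hmul := mul_lt_mul_of_pos_left hA (by linarith : (0:ℝ) < Lr c - l)
  have hneg : chi k c' hdel z' < 0 := by
    have hfac' := quad_fact c' z'
    have hrw : chi k c' hdel z'
        = (z' - Lr c') * (z' + (Lr c' - c')) + k * Real.exp (-(z' * c' * hdel)) := by
      unfold chi; linear_combination hfac'
    rw [hrw]
    have h1 : z' - Lr c' = -(Lr c - l) := by rw [hz'def]; ring
    rw [h1]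
    nlinarith [heq, hEE, hmul]
  have hlt : z' < l' := lam_gt_of_neg hc' hk hmax' hneg
  rw [hz'def] at hlt
  linarith

lemma eps2_step {hdel c c' m m' : ℝ} (hh : 0 ≤ hdel)
    (hc : 0 < c) (hcc : c < c')
    (hm0 : 0 < m) (hmeq : chiK c hdel m = 0)
    (hm'0 : 0 < m') (hm'eq : chiK c' hdel m' = 0)
    (huniq' : ∀ w, 0 < w → chiK c' hdel w = 0 → w = m') :
    m' - Lr c' < m - Lr c := by
  have hc' : 0 < c' := lt_trans hc hcc
  obtain ⟨hmL, heq⟩ := mu_facts hc hm0 hmeq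
  set z' := m + (Lr c' - Lr c) with hz'def
  have hLL : Lr c < Lr c' := Lr_lt hc hcc
  have hz'm : m < z' := by rw [hz'def]; linarith
  have hz'0 : 0 < z' := lt_trans hm0 hz'm
  have hkey := key_ineq hc hcc
  have hA : m + (Lr c - c) < z' + (Lr c' - c') := by rw [hz'def]; linarith
  have hB : 0 < m + (Lr c - c) := by linarith [Lr_gt_c hc]
  have hexp : Real.exp (-(z' * c' * hdel)) ≤ Real.exp (-(m * c * hdel)) := by
    apply Real.exp_le_exp.mpr
    have h1 : m * c ≤ z' * c' := by nlinarith
    nlinarith [mul_le_mul_of_nonneg_right h1 hh]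
  have hmul := mul_lt_mul_of_pos_left hA (by linarith : (0:ℝ) < m - Lr c)
  have hpos : 0 < chiK c' hdel z' := by
    have hfac' := quad_fact c' z'
    have hrw : chiK c' hdel z'
        = (z' - Lr c') * (z' + (Lr c' - c')) - Real.exp (-(z' * c' * hdel)) := by
      unfold chiK; linear_combination hfac'
    rw [hrw]
    have h1 : z' - Lr c' = m - Lr c := by rw [hz'def]; ring
    rw [h1]
    nlinarith [heq, hexp, hmul]
  have hlt : m' < z' := mu_lt_of_pos hm'0 hm'eq huniq' hz'0 hpos
  rw [hz'def] at hlt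
  linarith

end RatioAux

open RatioAux in
/-- The ratio `T(c) = λ₁(c)/μ₁(c)` is strictly increasing on `[c_#(h), ∞)`; equivalently,
with `λ̃₁(c) = (c + √(c²+4))/2`, both complementary functions `ε₁ = λ̃₁ - λ₁` and
`ε₂ = μ₁ - λ̃₁` are strictly decreasing with limit `0` at `+∞`, and `T(c) → 1` as
`c → +∞`. -/
theorem ratio_increasing
    (k h : ℝ) (hk : 1 < k) (hh : 0 ≤ h)
    (csharp : ℝ) (hcsharp_pos : 0 < csharp)
    (hcsharp : ∃ z : ℝ, 0 < z ∧ chi k csharp h z = 0 ∧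
      2 * z - csharp - k * csharp * h * Real.exp (-(z * csharp * h)) = 0)
    (hcsharp_uniq : ∀ c : ℝ, 0 < c →
      (∃ z : ℝ, 0 < z ∧ chi k c h z = 0 ∧
        2 * z - c - k * c * h * Real.exp (-(z * c * h)) = 0) → c = csharp)
    (lam1 mu1 : ℝ → ℝ)
    (hlam1 : ∀ c : ℝ, csharp ≤ c →
      0 < lam1 c ∧ chi k c h (lam1 c) = 0 ∧ ∀ z : ℝ, chi k c h z = 0 → z ≤ lam1 c)
    (hmu1 : ∀ c : ℝ, csharp ≤ c →
      0 < mu1 c ∧ chiK c h (mu1 c) = 0 ∧ ∀ z : ℝ, 0 < z → chiK c h z = 0 → z = mu1 c) :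
    StrictMonoOn (fun c => lam1 c / mu1 c) (Ici csharp) ∧
    StrictAntiOn (fun c => (c + Real.sqrt (c ^ 2 + 4)) / 2 - lam1 c) (Ici csharp) ∧
    StrictAntiOn (fun c => mu1 c - (c + Real.sqrt (c ^ 2 + 4)) / 2) (Ici csharp) ∧
    Tendsto (fun c => (c + Real.sqrt (c ^ 2 + 4)) / 2 - lam1 c) atTop (nhds 0) ∧
    Tendsto (fun c => mu1 c - (c + Real.sqrt (c ^ 2 + 4)) / 2) atTop (nhds 0) ∧
    Tendsto (fun c => lam1 c / mu1 c) atTop (nhds 1) := by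
  have hk0 : (0:ℝ) < k := lt_trans one_pos hk
  have hcpos : ∀ {c : ℝ}, csharp ≤ c → 0 < c := fun hc => lt_of_lt_of_le hcsharp_pos hc
  -- strict decrease of ε₁
  have hanti1 : StrictAntiOn (fun c => Lr c - lam1 c) (Ici csharp) := by
    intro a ha b hb hab
    have h1 := hlam1 a ha
    have h2 := hlam1 b hb
    exact eps1_step hk0 hh (hcpos ha) hab h1.1 h1.2.1 h2.2.2
  -- strict decrease of ε₂
  have hanti2 : StrictAntiOn (fun c => mu1 c - Lr c) (Ici csharp) := by
    intro a ha b hb hab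
    have h1 := hmu1 a ha
    have h2 := hmu1 b hb
    exact eps2_step hh (hcpos ha) hab h1.1 h1.2.1 h2.1 h2.2.1 h2.2.2
  -- strict increase of T
  have hmono : StrictMonoOn (fun c => lam1 c / mu1 c) (Ici csharp) := by
    intro a ha b hb hab
    have hla := hlam1 a ha; have hlb := hlam1 b hb
    have hma := hmu1 a ha; have hmb := hmu1 b hb
    have ha0 : 0 < a := hcpos ha
    have h1 : Lr b - lam1 b < Lr a - lam1 a := hanti1 ha hb hab
    have h2 : mu1 b - Lr b < mu1 a - Lr a := hanti2 ha hb hab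
    have hD : 0 < Lr b - Lr a := by linarith [Lr_lt ha0 hab]
    have hlam_lt_mu : lam1 a < mu1 a := by
      have hx := (lam_facts hk0 ha0 hla.1 hla.2.1).1
      have hy := (mu_facts ha0 hma.1 hma.2.1).1
      linarith
    show lam1 a / mu1 a < lam1 b / mu1 b
    rw [div_lt_div_iff₀ hma.1 hmb.1]
    have p1 : 0 < mu1 a * (lam1 b - lam1 a - (Lr b - Lr a)) := mul_pos hma.1 (by linarith)
    have p2 : 0 < lam1 a * (mu1 a + (Lr b - Lr a) - mu1 b) := mul_pos hla.1 (by linarith)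
    have p3 : 0 < (Lr b - Lr a) * (mu1 a - lam1 a) := mul_pos hD (by linarith)
    nlinarith [p1, p2, p3]
  -- eventual bounds for ε₁
  have hev1 : ∀ᶠ c in atTop, 0 ≤ Lr c - lam1 c ∧ Lr c - lam1 c ≤ 2*k/c := by
    filter_upwards [eventually_ge_atTop (max csharp (2*k+2))] with c hcge
    have hcs : csharp ≤ c := le_trans (le_max_left _ _) hcge
    have hc2k : 2*k+2 ≤ c := le_trans (le_max_right _ _) hcge
    have hc0 : 0 < c := hcpos hcs
    have hlc := hlam1 c hcs
    obtain ⟨hlL, heq⟩ := lam_facts hk0 hc0 hlc.1 hlc.2.1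
    have hneg : chi k c h (c/2) < 0 := by
      unfold chi
      have harg : -(c/2*c*h) ≤ 0 := by
        have := mul_nonneg (mul_nonneg (by linarith : (0:ℝ) ≤ c/2) hc0.le) hh
        linarith
      have hE : Real.exp (-(c/2*c*h)) ≤ 1 := by
        calc Real.exp (-(c/2*c*h)) ≤ Real.exp 0 := Real.exp_le_exp.mpr harg
        _ = 1 := Real.exp_zero
      nlinarith [mul_le_mul_of_nonneg_left hE hk0.le, hk]
    have hl2 : c/2 < lam1 c := lam_gt_of_neg hc0 hk0 hlc.2.2 hneg
    refine ⟨by linarith, ?_⟩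
    rw [le_div_iff₀ hc0]
    have hε : 0 ≤ Lr c - lam1 c := by linarith
    have harg : -(lam1 c * c * h) ≤ 0 := by
      have := mul_nonneg (mul_nonneg hlc.1.le hc0.le) hh
      linarith
    have hE1 : Real.exp (-(lam1 c * c * h)) ≤ 1 := by
      calc Real.exp (-(lam1 c * c * h)) ≤ Real.exp 0 := Real.exp_le_exp.mpr harg
      _ = 1 := Real.exp_zero
    have hLc := Lr_gt_c hc0
    nlinarith [heq, mul_le_mul_of_nonneg_left hE1 hk0.le,
      mul_le_mul_of_nonneg_left (show c/2 ≤ lam1 c + (Lr c - c) by linarith) hε]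
  -- eventual bounds for ε₂
  have hev2 : ∀ᶠ c in atTop, 0 ≤ mu1 c - Lr c ∧ mu1 c - Lr c ≤ 1/c := by
    filter_upwards [eventually_ge_atTop csharp] with c hcs
    have hc0 : 0 < c := hcpos hcs
    have hmc := hmu1 c hcs
    obtain ⟨hmL, heq⟩ := mu_facts hc0 hmc.1 hmc.2.1
    have harg : -(mu1 c * c * h) ≤ 0 := by
      have := mul_nonneg (mul_nonneg hmc.1.le hc0.le) hh
      linarith
    have hE1 : Real.exp (-(mu1 c * c * h)) ≤ 1 := by
      calc Real.exp (-(mu1 c * c * h)) ≤ Real.exp 0 := Real.exp_le_exp.mpr harg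
      _ = 1 := Real.exp_zero
    have hLc := Lr_gt_c hc0
    refine ⟨by linarith, ?_⟩
    rw [le_div_iff₀ hc0]
    nlinarith [heq, hE1,
      mul_le_mul_of_nonneg_left (show c ≤ mu1 c + (Lr c - c) by linarith)
        (show 0 ≤ mu1 c - Lr c by linarith)]
  -- limits
  have htd1 : Tendsto (fun c : ℝ => 2*k/c) atTop (nhds 0) :=
    tendsto_const_nhds.div_atTop tendsto_id
  have htd2 : Tendsto (fun c : ℝ => 1/c) atTop (nhds 0) :=
    tendsto_const_nhds.div_atTop tendsto_id
  have hT1 : Tendsto (fun c => Lr c - lam1 c) atTop (nhds 0) :=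
    tendsto_of_tendsto_of_tendsto_of_le_of_le' tendsto_const_nhds htd1
      (hev1.mono fun c hc => hc.1) (hev1.mono fun c hc => hc.2)
  have hT2 : Tendsto (fun c => mu1 c - Lr c) atTop (nhds 0) :=
    tendsto_of_tendsto_of_tendsto_of_le_of_le' tendsto_const_nhds htd2
      (hev2.mono fun c hc => hc.1) (hev2.mono fun c hc => hc.2)
  have hevT : ∀ᶠ c in atTop, 1 - (2*k+1)/c ≤ lam1 c / mu1 c ∧ lam1 c / mu1 c ≤ 1 := by
    filter_upwards [hev1, hev2, eventually_ge_atTop (max csharp 1)] with c h1 h2 hcge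
    have hcs : csharp ≤ c := le_trans (le_max_left _ _) hcge
    have hc1 : (1:ℝ) ≤ c := le_trans (le_max_right _ _) hcge
    have hc0 : 0 < c := hcpos hcs
    have hm0 := (hmu1 c hcs).1
    have hmga : 1 < mu1 c := by linarith [Lr_gt_one hc0, h2.1]
    have hlm : lam1 c ≤ mu1 c := by linarith [h1.1, h2.1]
    constructor
    · rw [le_div_iff₀ hm0]
      have hq : (2*k+1)/c = 2*k/c + 1/c := by ring
      have hsum : mu1 c - lam1 c ≤ (2*k+1)/c := by rw [hq]; linarith [h1.2, h2.2]
      have hq0 : 0 ≤ (2*k+1)/c := by positivity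
      nlinarith [mul_le_mul_of_nonneg_left hmga.le hq0, hsum]
    · exact (div_le_one hm0).mpr hlm
  have hlow : Tendsto (fun c : ℝ => 1 - (2*k+1)/c) atTop (nhds 1) := by
    have hdv : Tendsto (fun c : ℝ => (2*k+1)/c) atTop (nhds 0) :=
      tendsto_const_nhds.div_atTop tendsto_id
    simpa using (tendsto_const_nhds (x := (1:ℝ)) (f := atTop)).sub hdv
  have hTlim : Tendsto (fun c => lam1 c / mu1 c) atTop (nhds 1) :=
    tendsto_of_tendsto_of_tendsto_of_le_of_le' hlow tendsto_const_nhds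
      (hevT.mono fun c hc => hc.1) (hevT.mono fun c hc => hc.2)
  exact ⟨hmono, hanti1, hanti2, hT1, hT2, hTlim⟩
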